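/- arXiv:1712.02160 — 2 statements merged into one kernel-verified Lean document; each statement's English description precedes it below -/
import Mathlib

section
/- Let n ≥ 3, let Ω ⊆ ℝⁿ be a bounded measurable set, let y ∈ ℝⁿ, and let g : Ω → ℝ be measurable. Suppose there is a constant C₀ > 0 such that ∫_{Ω \ closure(B(y,r))} |g(x)|^{2n/(n−2)} dx ≤ C₀ r^{−n} for every r > 0. Then there exists a constant C = C(n, C₀) such that the distribution function of g satisfies |{x ∈ Ω : |g(x)| > t}| ≤ C t^{−n/(n−2)} for every t > 0. -/
open MeasureTheory Metric Set Module

/-!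
Split `{|g| > t}` into its part inside `closedBall y r`, of measure `ω r ^ n`, and its part
outside, of measure at most `C₀ r ^ (-n) / t ^ p` by Chebyshev's inequality (`ω` is the volume
of the unit ball, `p = 2 n / (n - 2)`). Choosing `r ^ (2 n) = t ^ (-p)` balances the two terms and gives the bound `(ω + C₀) t ^ (-p / 2)`.
-/

theorem measure_lt_abs_le_of_lintegral_rpow_le {α : Type*} [MeasurableSpace α] {μ : Measure α}
    {f : α → ℝ} (hf : Measurable f) (S : Set α) {p t K : ℝ} (hp : 0 < p) (ht : 0 < t)
    (hK : ∫⁻ x in S, ENNReal.ofReal (|f x| ^ p) ∂μ ≤ ENNReal.ofReal K) :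
    μ {x ∈ S | t < |f x|} ≤ ENNReal.ofReal (K / t ^ p) := by
  have htp : 0 < t ^ p := Real.rpow_pos_of_pos ht p
  have hmeas : Measurable fun x => ENNReal.ofReal (|f x| ^ p) := by fun_prop
  have hsub : {x ∈ S | t < |f x|} ⊆ {x | ENNReal.ofReal (t ^ p) ≤ ENNReal.ofReal (|f x| ^ p)} ∩ S :=
    fun x hx => ⟨ENNReal.ofReal_le_ofReal (Real.rpow_le_rpow ht.le hx.2.le hp.le), hx.1⟩
  calc μ {x ∈ S | t < |f x|}
      ≤ μ.restrict S {x | ENNReal.ofReal (t ^ p) ≤ ENNReal.ofReal (|f x| ^ p)} := by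
        rw [Measure.restrict_apply (measurableSet_le measurable_const hmeas)]
        exact measure_mono hsub
    _ ≤ (∫⁻ x in S, ENNReal.ofReal (|f x| ^ p) ∂μ) / ENNReal.ofReal (t ^ p) :=
        meas_ge_le_lintegral_div hmeas.aemeasurable (ENNReal.ofReal_pos.2 htp).ne'
          ENNReal.ofReal_ne_top
    _ ≤ ENNReal.ofReal K / ENNReal.ofReal (t ^ p) := by gcongr
    _ = ENNReal.ofReal (K / t ^ p) := (ENNReal.ofReal_div_of_pos htp).symm

section AddHaar

variable {E : Type*} [NormedAddCommGroup E] [NormedSpace ℝ E] [MeasurableSpace E] [BorelSpace E]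
  [FiniteDimensional ℝ E] (μ : Measure E) [μ.IsAddHaarMeasure]

theorem addHaar_closedBall_eq_ofReal (y : E) {r : ℝ} (hr : 0 ≤ r) :
    μ (closedBall y r) = ENNReal.ofReal (μ.real (ball 0 1) * r ^ finrank ℝ E) := by
  rw [← ofReal_measureReal (measure_closedBall_lt_top (x := y)).ne,
    Measure.addHaar_real_closedBall μ y hr, mul_comm]

theorem measure_lt_abs_le_of_lintegral_compl_closedBall_le [Nontrivial E] {f : E → ℝ}
    (hf : Measurable f) (S : Set E) (y : E) {p K : ℝ} (hp : 0 < p) (hK : 0 ≤ K)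
    (hbound : ∀ r : ℝ, 0 < r → ∫⁻ x in S \ closedBall y r, ENNReal.ofReal (|f x| ^ p) ∂μ ≤
      ENNReal.ofReal (K * r ^ (-(finrank ℝ E : ℝ))))
    {t : ℝ} (ht : 0 < t) :
    μ {x ∈ S | t < |f x|} ≤ ENNReal.ofReal ((μ.real (ball 0 1) + K) * t ^ (-(p / 2))) := by
  have hd : (0 : ℝ) < finrank ℝ E := Nat.cast_pos.2 finrank_pos
  set r : ℝ := t ^ (-(p / (2 * finrank ℝ E)))
  have hr : 0 < r := Real.rpow_pos_of_pos ht _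
  have hr_pow : r ^ finrank ℝ E = t ^ (-(p / 2)) := by
    rw [← Real.rpow_natCast, ← Real.rpow_mul ht.le]
    congr 1
    field_simp
  have hr_rpow : K * r ^ (-(finrank ℝ E : ℝ)) / t ^ p = K * t ^ (-(p / 2)) := by
    rw [← Real.rpow_mul ht.le, mul_div_assoc, ← Real.rpow_sub ht]
    congr 2
    field_simp
    ring
  have hsplit : {x ∈ S | t < |f x|} ⊆ closedBall y r ∪ {x ∈ S \ closedBall y r | t < |f x|} :=
    fun x hx => or_iff_not_imp_left.2 fun hxr => ⟨⟨hx.1, hxr⟩, hx.2⟩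
  calc μ {x ∈ S | t < |f x|}
      ≤ μ (closedBall y r) + μ {x ∈ S \ closedBall y r | t < |f x|} :=
        (measure_mono hsplit).trans (measure_union_le _ _)
    _ ≤ ENNReal.ofReal (μ.real (ball 0 1) * t ^ (-(p / 2))) +
          ENNReal.ofReal (K * t ^ (-(p / 2))) := by
        rw [addHaar_closedBall_eq_ofReal μ y hr.le, hr_pow, ← hr_rpow]
        gcongr
        exact measure_lt_abs_le_of_lintegral_rpow_le hf _ hp ht (hbound r hr)
    _ = ENNReal.ofReal ((μ.real (ball 0 1) + K) * t ^ (-(p / 2))) := by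
        rw [← ENNReal.ofReal_add (by positivity) (by positivity), add_mul]

end AddHaar

theorem distribution_bound_of_annular_integral_bound_general
    (n : ℕ) (hn : 3 ≤ n) (Ω : Set (EuclideanSpace ℝ (Fin n)))
    (y : EuclideanSpace ℝ (Fin n)) (g : EuclideanSpace ℝ (Fin n) → ℝ)
    (hg : Measurable g) (C₀ : ℝ) (hC₀ : 0 < C₀)
    (hbound : ∀ r : ℝ, 0 < r →
      ∫⁻ x in Ω \ closedBall y r, ENNReal.ofReal (|g x| ^ ((2 * n : ℝ) / ((n : ℝ) - 2))) ≤
        ENNReal.ofReal (C₀ * r ^ (-(n : ℝ)))) :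
    ∃ C : ℝ, 0 < C ∧ ∀ t : ℝ, 0 < t →
      volume {x ∈ Ω | t < |g x|} ≤
        ENNReal.ofReal (C * t ^ (-((n : ℝ) / ((n : ℝ) - 2)))) := by
  have hn2 : (0 : ℝ) < n - 2 := by
    have : (3 : ℝ) ≤ n := by exact_mod_cast hn
    linarith
  have : NeZero n := ⟨by omega⟩
  refine ⟨volume.real (ball (0 : EuclideanSpace ℝ (Fin n)) 1) + C₀, by positivity, fun t ht => ?_⟩
  have hexp : (n : ℝ) / (n - 2) = (2 * n : ℝ) / (n - 2) / 2 := by ring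
  rw [hexp]
  refine measure_lt_abs_le_of_lintegral_compl_closedBall_le volume hg Ω y
    (div_pos (by positivity) hn2) hC₀.le (fun r hr => ?_) ht
  rw [finrank_euclideanSpace_fin]
  exact hbound r hr

/-- If `∫_{Ω \ closure(B(y,r))} |g|^{2n/(n−2)} ≤ C₀ r^{−n}` for all `r > 0`,
then the distribution function of `g` satisfies `|{|g| > t}| ≤ C t^{−n/(n−2)}`. -/
theorem distribution_bound_of_annular_integral_bound
    (n : ℕ) (hn : 3 ≤ n) (Ω : Set (EuclideanSpace ℝ (Fin n)))
    (hΩmeas : MeasurableSet Ω) (hΩbdd : Bornology.IsBounded Ω)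
    (y : EuclideanSpace ℝ (Fin n)) (g : EuclideanSpace ℝ (Fin n) → ℝ)
    (hg : Measurable g) (C₀ : ℝ) (hC₀ : 0 < C₀)
    (hbound : ∀ r : ℝ, 0 < r →
      ∫⁻ x in Ω \ closedBall y r, ENNReal.ofReal (|g x| ^ ((2 * n : ℝ) / ((n : ℝ) - 2))) ≤
        ENNReal.ofReal (C₀ * r ^ (-(n : ℝ)))) :
    ∃ C : ℝ, 0 < C ∧ ∀ t : ℝ, 0 < t →
      volume {x ∈ Ω | t < |g x|} ≤
        ENNReal.ofReal (C * t ^ (-((n : ℝ) / ((n : ℝ) - 2)))) :=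
  distribution_bound_of_annular_integral_bound_general n hn Ω y g hg C₀ hC₀ hbound
end

section
/- Let n ≥ 3, let Ω ⊆ ℝⁿ be a bounded measurable set, let y ∈ ℝⁿ, and let h : Ω → ℝ be measurable. Suppose there is a constant C₀ > 0 such that ∫_{Ω \ closure(B(y,r))} |h(x)|² dx ≤ C₀ r^{−n} for every r > 0. Then there exists a constant C = C(n, C₀) such that the distribution function of h satisfies |{x ∈ Ω : |h(x)| > t}| ≤ C t^{−1} for every t > 0. -/
/-!
Split `{|h| > t}` along the ball `closedBall y r` with `r = t^{-1/n}`. Inside the ball the set has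
measure at most `|B(0,1)| rⁿ = |B(0,1)| t⁻¹`; outside, Chebyshev's inequality and the hypothesis give
measure at most `t⁻² C₀ r⁻ⁿ = C₀ t⁻¹`.
-/

open MeasureTheory Metric Set

theorem measure_sep_lt_abs_le_setLIntegral_sq_div {α : Type*} [MeasurableSpace α]
    (μ : Measure α) (s : Set α) {f : α → ℝ} (hf : AEMeasurable f (μ.restrict s))
    {t : ℝ} (ht : 0 < t) :
    μ {x ∈ s | t < |f x|} ≤
      (∫⁻ x in s, ENNReal.ofReal (|f x| ^ 2) ∂μ) / ENNReal.ofReal (t ^ 2) := by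
  calc μ {x ∈ s | t < |f x|}
      ≤ μ.restrict s {x | ENNReal.ofReal (t ^ 2) ≤ ENNReal.ofReal (|f x| ^ 2)} := by
        refine (measure_mono ?_).trans (Measure.le_restrict_apply _ _)
        rintro x ⟨hxs, hx⟩
        exact ⟨ENNReal.ofReal_le_ofReal (pow_le_pow_left₀ ht.le hx.le 2), hxs⟩
    _ ≤ _ := meas_ge_le_lintegral_div (by fun_prop) (by simpa using ht.ne') ENNReal.ofReal_ne_top

theorem Real.inv_rpow_inv_natCast_rpow_neg {t : ℝ} (ht : 0 < t) {n : ℕ} (hn : n ≠ 0) :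
    (t⁻¹ ^ (n⁻¹ : ℝ)) ^ (-(n : ℝ)) = t := by
  rw [Real.rpow_neg (by positivity), Real.rpow_natCast, Real.rpow_inv_natCast_pow (by positivity) hn,
    inv_inv]

section AddHaar

variable {E : Type*} [NormedAddCommGroup E] [NormedSpace ℝ E] [MeasurableSpace E] [BorelSpace E]
  [FiniteDimensional ℝ E] (μ : Measure E) [μ.IsAddHaarMeasure]

theorem measure_sep_lt_abs_le_of_setLIntegral_sq_diff_closedBall_le
    (hE : Module.finrank ℝ E ≠ 0) {Ω : Set E} {y : E} {h : E → ℝ} (hh : Measurable h)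
    {C₀ : ℝ} (hC₀ : 0 ≤ C₀)
    (hbound : ∀ r : ℝ, 0 < r →
      ∫⁻ x in Ω \ closedBall y r, ENNReal.ofReal (|h x| ^ 2) ∂μ ≤
        ENNReal.ofReal (C₀ * r ^ (-(Module.finrank ℝ E : ℝ))))
    {t : ℝ} (ht : 0 < t) :
    μ {x ∈ Ω | t < |h x|} ≤ ENNReal.ofReal (((μ (ball 0 1)).toReal + C₀) * t⁻¹) := by
  set n := Module.finrank ℝ E
  set r := t⁻¹ ^ (n⁻¹ : ℝ)
  have hr : 0 < r := by positivity
  have hball : μ (closedBall y r) = ENNReal.ofReal ((μ (ball 0 1)).toReal * t⁻¹) := by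
    rw [Measure.addHaar_closedBall μ y hr.le, Real.rpow_inv_natCast_pow (by positivity) hE,
      mul_comm, ENNReal.ofReal_mul ENNReal.toReal_nonneg, ENNReal.ofReal_toReal measure_ball_lt_top.ne]
  have hout : μ ({x ∈ Ω | t < |h x|} \ closedBall y r) ≤ ENNReal.ofReal (C₀ * t⁻¹) := by
    calc μ ({x ∈ Ω | t < |h x|} \ closedBall y r)
        = μ {x ∈ Ω \ closedBall y r | t < |h x|} := by congr 1; ext x; simp [and_right_comm]
      _ ≤ ENNReal.ofReal (C₀ * t) / ENNReal.ofReal (t ^ 2) := by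
          refine (measure_sep_lt_abs_le_setLIntegral_sq_div μ _ hh.aemeasurable ht).trans ?_
          gcongr
          simpa [r, Real.inv_rpow_inv_natCast_rpow_neg ht hE] using hbound r hr
      _ = ENNReal.ofReal (C₀ * t⁻¹) := by
          rw [← ENNReal.ofReal_div_of_pos (by positivity)]
          congr 1
          field_simp
  calc μ {x ∈ Ω | t < |h x|}
      ≤ μ ({x ∈ Ω | t < |h x|} ∩ closedBall y r) + μ ({x ∈ Ω | t < |h x|} \ closedBall y r) :=
        measure_le_inter_add_sdiff _ _ _
    _ ≤ ENNReal.ofReal ((μ (ball 0 1)).toReal * t⁻¹) + ENNReal.ofReal (C₀ * t⁻¹) := by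
        gcongr
        exact hball ▸ measure_mono inter_subset_right
    _ = ENNReal.ofReal (((μ (ball 0 1)).toReal + C₀) * t⁻¹) := by
        rw [← ENNReal.ofReal_add (by positivity) (by positivity), add_mul]

end AddHaar

theorem distribution_bound_of_annular_L2_bound_general
    (n : ℕ) (hn : 3 ≤ n) (Ω : Set (EuclideanSpace ℝ (Fin n)))
    (y : EuclideanSpace ℝ (Fin n)) (h : EuclideanSpace ℝ (Fin n) → ℝ)
    (hh : Measurable h) (C₀ : ℝ) (hC₀ : 0 < C₀)
    (hbound : ∀ r : ℝ, 0 < r →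
      ∫⁻ x in Ω \ closedBall y r, ENNReal.ofReal (|h x| ^ 2) ≤
        ENNReal.ofReal (C₀ * r ^ (-(n : ℝ)))) :
    ∃ C : ℝ, 0 < C ∧ ∀ t : ℝ, 0 < t →
      volume {x ∈ Ω | t < |h x|} ≤ ENNReal.ofReal (C * t⁻¹) := by
  have hdim : Module.finrank ℝ (EuclideanSpace ℝ (Fin n)) = n := finrank_euclideanSpace_fin
  refine ⟨(volume (ball (0 : EuclideanSpace ℝ (Fin n)) 1)).toReal + C₀, by positivity, fun t ht => ?_⟩
  exact measure_sep_lt_abs_le_of_setLIntegral_sq_diff_closedBall_le volume (by omega) hh hC₀.le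
    (by simpa only [hdim] using hbound) ht

/-- If `∫_{Ω \ closure(B(y,r))} |h|² ≤ C₀ r^{−n}` for all `r > 0`, then the
distribution function of `h` satisfies `|{|h| > t}| ≤ C t^{−1}`. -/
theorem distribution_bound_of_annular_L2_bound
    (n : ℕ) (hn : 3 ≤ n) (Ω : Set (EuclideanSpace ℝ (Fin n)))
    (hΩmeas : MeasurableSet Ω) (hΩbdd : Bornology.IsBounded Ω)
    (y : EuclideanSpace ℝ (Fin n)) (h : EuclideanSpace ℝ (Fin n) → ℝ)
    (hh : Measurable h) (C₀ : ℝ) (hC₀ : 0 < C₀)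
    (hbound : ∀ r : ℝ, 0 < r →
      ∫⁻ x in Ω \ closedBall y r, ENNReal.ofReal (|h x| ^ 2) ≤
        ENNReal.ofReal (C₀ * r ^ (-(n : ℝ)))) :
    ∃ C : ℝ, 0 < C ∧ ∀ t : ℝ, 0 < t →
      volume {x ∈ Ω | t < |h x|} ≤ ENNReal.ofReal (C * t⁻¹) :=
  distribution_bound_of_annular_L2_bound_general n hn Ω y h hh C₀ hC₀ hbound
end
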